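/- Let N, D be natural numbers with 1 ≤ D ≤ N. Then Σ_{i=1}^{D} log₂(N − (i−1)) ≤ D·log₂ N − D·(D−1) / (2·N). -/

import Mathlib

/-!
Each term obeys `log₂ (N - k) ≤ log₂ N - k / N`: indeed `log₂ (1 - k/N) ≤ ln (1 - k/N) ≤ -k/N`,
the first step because `ln 2 ≤ 1` and the logarithm is nonpositive there. Summing over
`k = 0, …, D - 1` gives the bound, since these `k` add up to `D (D - 1) / 2`.
-/

open Real Finset

lemma logb_le_log_of_le_one {b x : ℝ} (hb : 1 < b) (hbe : b ≤ exp 1) (hx : 0 < x)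
    (hx1 : x ≤ 1) : logb b x ≤ log x := by
  have hlogb : 0 < log b := log_pos hb
  have hlogb1 : log b ≤ 1 := (log_le_iff_le_exp (by linarith)).2 hbe
  rw [logb, div_le_iff₀ hlogb]
  nlinarith [log_nonpos hx.le hx1]

lemma logb_sub_le {b c k : ℝ} (hb : 1 < b) (hbe : b ≤ exp 1) (hk : 0 ≤ k) (hkc : k < c) :
    logb b (c - k) ≤ logb b c - k / c := by
  have hc : 0 < c := hk.trans_lt hkc
  have hratio : 0 < (c - k) / c := div_pos (by linarith) hc
  calc logb b (c - k) = logb b c + logb b ((c - k) / c) := by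
        rw [logb_div (by linarith) hc.ne']; ring
    _ ≤ logb b c + ((c - k) / c - 1) := by
        gcongr
        exact (logb_le_log_of_le_one hb hbe hratio
          ((div_le_one hc).2 (by linarith))).trans (log_le_sub_one_of_pos hratio)
    _ = logb b c - k / c := by field_simp; ring

lemma sum_Icc_one_cast_sub_one (D : ℕ) :
    ∑ i ∈ Icc 1 D, ((i : ℝ) - 1) = D * (D - 1) / 2 := by
  induction D with
  | zero => simp
  | succ n ih =>
    rw [sum_Icc_succ_top (Nat.succ_le_succ n.zero_le), ih]
    push_cast
    ring

theorem tagt_upper_bound_general (N D : ℕ) (hDN : D ≤ N) :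
    ∑ i ∈ Finset.Icc 1 D, Real.logb 2 ((N : ℝ) - ((i : ℝ) - 1))
      ≤ (D : ℝ) * Real.logb 2 (N : ℝ) - (D : ℝ) * ((D : ℝ) - 1) / (2 * (N : ℝ)) := by
  have two_le_exp_one : (2 : ℝ) ≤ exp 1 := by linarith [add_one_le_exp (1 : ℝ)]
  calc ∑ i ∈ Icc 1 D, logb 2 ((N : ℝ) - ((i : ℝ) - 1))
      ≤ ∑ i ∈ Icc 1 D, (logb 2 (N : ℝ) - ((i : ℝ) - 1) / N) := by
        refine sum_le_sum fun i hi => logb_sub_le one_lt_two two_le_exp_one ?_ ?_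
        · exact sub_nonneg.2 (Nat.one_le_cast.2 (mem_Icc.1 hi).1)
        · have hiN : (i : ℝ) ≤ N := by exact_mod_cast (mem_Icc.1 hi).2.trans hDN
          linarith
    _ = D * logb 2 N - D * (D - 1) / (2 * N) := by
        rw [sum_sub_distrib, sum_const, Nat.card_Icc, ← sum_div, sum_Icc_one_cast_sub_one,
          div_div, Nat.add_sub_cancel, nsmul_eq_mul]

/-- Special case `S₂ = 1` of the paper's upper-bound theorem (Theorem 4),
corresponding to traditional adaptive group testing without pruning: for naturals
`1 ≤ D ≤ N`, `Σ_{i=1}^{D} log₂(N − (i−1)) ≤ D·log₂ N − D·(D−1)/(2·N)`. -/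
theorem tagt_upper_bound (N D : ℕ) (hD : 1 ≤ D) (hDN : D ≤ N) :
    ∑ i ∈ Finset.Icc 1 D, Real.logb 2 ((N : ℝ) - ((i : ℝ) - 1))
      ≤ (D : ℝ) * Real.logb 2 (N : ℝ) - (D : ℝ) * ((D : ℝ) - 1) / (2 * (N : ℝ)) :=
  tagt_upper_bound_general N D hDN
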